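/- arXiv:0906.4082 — 10 statements merged into one kernel-verified Lean document; each statement's English description precedes it below -/
import Mathlib

section
/- Let J be a finite index set, Π = Π_{i∈J} X_i, and Σ ⊆ Π. If σ and σ' agree on all relevant indices of Σ (i.e., σ↾R(Σ) = σ'↾R(Σ)) and σ ∈ Σ, then σ' ∈ Σ. -/
/-- An index `i` is irrelevant for `S` iff `S` is closed under arbitrary changes of
the `i`-th coordinate. -/
def Irrelevant {J : Type*} [DecidableEq J] {X : J → Type*}
    (S : Set (∀ i, X i)) (i : J) : Prop :=
  ∀ σ ∈ S, ∀ x : X i, Function.update σ i x ∈ S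

/-- The relevant (essential) indices of `S`. -/
def RelIdx {J : Type*} [DecidableEq J] {X : J → Type*} (S : Set (∀ i, X i)) : Set J :=
  {i | ¬ Irrelevant S i}

theorem aux_relevant
    {J : Type*} [Fintype J] [DecidableEq J] {X : J → Type*}
    (S : Set (∀ i, X i)) (s : Finset J) :
    ∀ (σ σ' : ∀ i, X i), (∀ i ∉ s, σ i = σ' i) →
    (∀ i ∈ RelIdx S, σ i = σ' i) → σ ∈ S → σ' ∈ S := by
  induction s using Finset.induction with
  | empty =>
    intro σ σ' hout _ hσ
    have : σ = σ' := funext fun i => hout i (Finset.notMem_empty i)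
    rwa [← this]
  | @insert a t ha ih =>
    intro σ σ' hout hrel hσ
    set τ : ∀ i, X i := Function.update σ a (σ' a) with hτ
    have hτS : τ ∈ S := by
      by_cases h : Irrelevant S a
      · exact h σ hσ (σ' a)
      · have : σ a = σ' a := hrel a h
        have : τ = σ := by
          funext i
          by_cases hi : i = a
          · subst hi; simp [hτ, this.symm]
          · simp [hτ, Function.update_of_ne hi]
        rwa [this]
    refine ih τ σ' (fun i hi => ?_) (fun i hi => ?_) hτS
    · by_cases hia : i = a
      · subst hia; simp [hτ]
      · have : i ∉ insert a t := by simp [hia, hi]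
        simp [hτ, Function.update_of_ne hia, hout i this]
    · by_cases hia : i = a
      · subst hia; simp [hτ]
      · simp [hτ, Function.update_of_ne hia, hrel i hi]

/-- if `σ` and `σ'` agree on all relevant indices of `S` and `σ ∈ S`,
then `σ' ∈ S`. -/
theorem membership_depends_only_on_relevant
    {J : Type*} [Fintype J] [DecidableEq J] {X : J → Type*}
    (S : Set (∀ i, X i)) (σ σ' : ∀ i, X i)
    (hagree : ∀ i ∈ RelIdx S, σ i = σ' i) (hσ : σ ∈ S) : σ' ∈ S := by
  exact aux_relevant S Finset.univ σ σ' (fun i hi => absurd (Finset.mem_univ i) hi) hagree hσ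
end

section
/- Let J be a finite index set, Π = Π_{i∈J} X_i, and Σ' ⊆ Σ ⊆ Π. Define Σ'' := { σ ∈ Π : ∃ σ' ∈ Σ', σ agrees with σ' on R(Σ) ∩ R(Σ') } (i.e., Σ'' = Σ'↾(R(Σ)∩R(Σ')) × Π↾(I(Σ)∪I(Σ'))). Then Σ' ⊆ Σ'' ⊆ Σ. (Semantic interpolation: Σ'' has all its relevant indices among those relevant for both Σ and Σ'.) -/
/-- Key lemma: if `σ ∈ S` and `τ` differs from `σ` only on indices in a finite set `s`
that are irrelevant for `S`, then `τ ∈ S`. -/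
lemma agree_off_irrelevant {J : Type*} [DecidableEq J] {X : J → Type*}
    (S : Set (∀ i, X i)) (s : Finset J) :
    ∀ σ ∈ S, ∀ τ : ∀ i, X i,
      (∀ i, σ i ≠ τ i → i ∈ s ∧ Irrelevant S i) → τ ∈ S := by
  induction s using Finset.induction_on with
  | empty =>
    intro σ hσ τ h
    have : σ = τ := funext fun i => by
      by_contra hi
      exact Finset.notMem_empty i (h i hi).1
    exact this ▸ hσ
  | @insert a s hnot ih =>
    intro σ hσ τ h
    have hupd : Function.update σ a (τ a) ∈ S := by
      by_cases hca : σ a = τ a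
      · rwa [← hca, Function.update_eq_self]
      · exact (h a hca).2 σ hσ (τ a)
    apply ih _ hupd τ
    intro i hi
    have hia : i ≠ a := by
      intro heq; subst heq
      exact hi (Function.update_self i (τ i) σ)
    have : σ i ≠ τ i := by rwa [Function.update_of_ne hia] at hi
    rcases h i this with ⟨hmem, hirr⟩
    exact ⟨(Finset.mem_insert.mp hmem).resolve_left hia, hirr⟩

/-- semantic interpolation.  With
`S'' = {σ | ∃ σ' ∈ S', σ agrees with σ' on RelIdx S ∩ RelIdx S'}` we have
`S' ⊆ S'' ⊆ S`. -/
theorem semantic_interpolation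
    {J : Type*} [Fintype J] [DecidableEq J] {X : J → Type*}
    (S' S : Set (∀ i, X i)) (hsub : S' ⊆ S) :
    S' ⊆ {σ | ∃ σ' ∈ S', ∀ i ∈ RelIdx S ∩ RelIdx S', σ i = σ' i} ∧
      {σ | ∃ σ' ∈ S', ∀ i ∈ RelIdx S ∩ RelIdx S', σ i = σ' i} ⊆ S := by
  classical
  constructor
  · intro σ hσ
    exact ⟨σ, hσ, fun i _ => rfl⟩
  · rintro σ ⟨σ', hσ', hagree⟩
    set τ : ∀ i, X i := fun i => if Irrelevant S' i then σ i else σ' i with hτ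
    have hτS' : τ ∈ S' := by
      apply agree_off_irrelevant S' Finset.univ σ' hσ' τ
      intro i hi
      refine ⟨Finset.mem_univ i, ?_⟩
      by_contra h
      apply hi
      simp only [hτ, if_neg h]
    have hτagree : ∀ i, τ i ≠ σ i → i ∉ RelIdx S := by
      intro i hi hrel
      by_cases h : Irrelevant S' i
      · exact hi (by simp [hτ, if_pos h])
      · have := hagree i ⟨hrel, h⟩
        exact hi (by simp [hτ, if_neg h, this])
    apply agree_off_irrelevant S Finset.univ τ (hsub hτS') σ
    intro i hi
    refine ⟨Finset.mem_univ i, ?_⟩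
    have := hτagree i hi
    simpa [RelIdx, not_not] using this
end

section
/- Parallel interpolation (product on the left): Let J be finite with disjoint cover 𝒥, Σ' = Π_{K∈𝒥} Σ'_K ⊆ Σ ⊆ Π_{i∈J} X_i, where Σ'_K ⊆ Π_{i∈K} X_i. For each K, let Σ''_K := { s ∈ Π_{i∈K} X_i : ∃ s' ∈ Σ'_K, s agrees with s' on R(Σ)∩R(Σ'_K)∩K }, and let Σ'' := Π_{K∈𝒥} Σ''_K. Then Σ' ⊆ Σ'' ⊆ Σ. -/
/-- Membership only depends on relevant coordinates (finite index type). -/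
lemma mem_of_agree_on_relIdx {J : Type*} [Fintype J] [DecidableEq J] {X : J → Type*}
    (S : Set (∀ i, X i)) (s₀ : ∀ i, X i) (h₀ : s₀ ∈ S)
    (s : ∀ i, X i) (hag : ∀ i ∈ RelIdx S, s i = s₀ i) : s ∈ S := by
  classical
  suffices H : ∀ D : Finset J, ∀ s : ∀ i, X i,
      (∀ i, i ∉ D → s i = s₀ i) → (∀ i ∈ RelIdx S, s i = s₀ i) → s ∈ S by
    exact H Finset.univ s (fun i hi => absurd (Finset.mem_univ i) hi) hag
  intro D
  induction D using Finset.induction with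
  | empty =>
    intro s h _
    have : s = s₀ := funext fun i => h i (Finset.notMem_empty i)
    exact this ▸ h₀
  | @insert a D' ha ih =>
    intro s h hrel
    by_cases hrelA : a ∈ RelIdx S
    · have hsa : s a = s₀ a := hrel a hrelA
      refine ih s (fun i hi => ?_) hrel
      by_cases hia : i = a
      · exact hia ▸ hsa
      · exact h i (by simp [hia, hi])
    · have hirr : Irrelevant S a := not_not.mp hrelA
      set s₁ := Function.update s a (s₀ a) with hs₁
      have h₁ : s₁ ∈ S := by
        refine ih s₁ (fun i hi => ?_) (fun i hi => ?_)
        · by_cases hia : i = a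
          · subst hia; simp [hs₁]
          · simp only [hs₁, Function.update_of_ne hia]
            exact h i (by simp [hia, hi])
        · by_cases hia : i = a
          · subst hia; simp [hs₁]
          · simp only [hs₁, Function.update_of_ne hia]
            exact hrel i hi
      have := hirr s₁ h₁ (s a)
      have heq : Function.update s₁ a (s a) = s := by
        funext i
        by_cases hia : i = a
        · subst hia; simp
        · simp [hs₁, Function.update_of_ne hia]
      rwa [heq] at this

/-- parallel interpolation, product on the left.
`S' = Π_{K∈𝒥} S'_K ⊆ S`; the blocks of the disjoint cover are the fibers of
`f : J → ι`.  With `S''_K := {s | ∃ s' ∈ S'_K, s agrees with s' on R(S)∩R(S'_K)∩K}`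
and `S'' := Π_K S''_K`, we get `S' ⊆ S'' ⊆ S`. -/
theorem parallel_interpolation_left
    {J ι : Type*} [Fintype J] [DecidableEq J] {X : J → Type*}
    (f : J → ι)
    (SK' : ∀ k : ι, Set (∀ i : {i // f i = k}, X i.1))
    (S' S : Set (∀ i, X i))
    (hS' : ∀ σ, σ ∈ S' ↔ ∀ k, (fun i : {i // f i = k} => σ i.1) ∈ SK' k)
    (hsub : S' ⊆ S)
    (SK'' : ∀ k : ι, Set (∀ i : {i // f i = k}, X i.1))
    (hSK'' : ∀ k, SK'' k =
      {s | ∃ s' ∈ SK' k, ∀ i : {i // f i = k},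
        i.1 ∈ RelIdx S → i ∈ RelIdx (SK' k) → s i = s' i})
    (S'' : Set (∀ i, X i))
    (hS'' : ∀ σ, σ ∈ S'' ↔ ∀ k, (fun i : {i // f i = k} => σ i.1) ∈ SK'' k) :
    S' ⊆ S'' ∧ S'' ⊆ S := by
  classical
  constructor
  · -- S' ⊆ S''
    intro σ hσ
    rw [hS'']
    intro k
    rw [hSK'']
    exact ⟨_, (hS' σ).mp hσ k, fun i _ _ => rfl⟩
  · -- S'' ⊆ S
    intro σ hσ
    -- choose witnesses in each block
    have hblk : ∀ k, ∃ s' ∈ SK' k, ∀ i : {i // f i = k},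
        i.1 ∈ RelIdx S → i ∈ RelIdx (SK' k) → σ i.1 = s' i := by
      intro k
      have := (hS'' σ).mp hσ k
      rw [hSK''] at this
      exact this
    choose w hw hwag using hblk
    -- block-wise interpolant
    set t : ∀ k, ∀ i : {i // f i = k}, X i.1 :=
      fun k i => if i ∈ RelIdx (SK' k) then w k i else σ i.1 with ht
    set τ : ∀ i, X i := fun j => t (f j) ⟨j, rfl⟩ with hτ
    have hrestr : ∀ k, (fun i : {i // f i = k} => τ i.1) = t k := by
      intro k
      funext i
      obtain ⟨j, hj⟩ := i
      subst hj
      rfl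
    have hτS' : τ ∈ S' := by
      rw [hS']
      intro k
      rw [hrestr k]
      refine mem_of_agree_on_relIdx (SK' k) (w k) (hw k) (t k) ?_
      intro i hi
      simp [ht, hi]
    have hτS : τ ∈ S := hsub hτS'
    refine mem_of_agree_on_relIdx S τ hτS σ ?_
    intro i hi
    show σ i = t (f i) ⟨i, rfl⟩
    by_cases hrel : (⟨i, rfl⟩ : {j // f j = f i}) ∈ RelIdx (SK' (f i))
    · rw [ht]; simp only [hrel, if_pos]
      exact hwag (f i) ⟨i, rfl⟩ hi hrel
    · simp [ht, hrel]
end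

section
/- Parallel interpolation (product on the right): Let J be finite with disjoint cover 𝒥, and Σ' ⊆ Σ = Π_{K∈𝒥} Σ_K ⊆ Π_{i∈J} X_i with each Σ_K ⊆ Π_{i∈K} X_i nonempty. For each K, let Σ''_K := { s ∈ Π_{i∈K} X_i : ∃ σ' ∈ Σ', s agrees with σ'↾K on R(Σ')∩R(Σ_K) }, and Σ'' := Π_{K∈𝒥} Σ''_K. Then Σ' ⊆ Σ'' ⊆ Σ. -/
/-- Membership depends only on the relevant coordinates (finite index type). -/
theorem mem_of_eqOn_relIdx {J : Type*} [Fintype J] [DecidableEq J] {X : J → Type*}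
    (S : Set (∀ i, X i)) {s t : ∀ i, X i} (ht : t ∈ S)
    (h : ∀ i ∈ RelIdx S, s i = t i) : s ∈ S := by
  suffices H : ∀ (A : Finset J) (s : ∀ i, X i), (∀ i ∈ RelIdx S, s i = t i) →
      (∀ i ∉ A, s i = t i) → s ∈ S by
    exact H Finset.univ s h (fun i hi => absurd (Finset.mem_univ i) hi)
  intro A
  induction A using Finset.induction with
  | empty =>
    intro s h1 h2
    have : s = t := funext fun i => h2 i (by simp)
    rwa [this]
  | @insert a A ha IH =>
    intro s h1 h2
    by_cases hat : s a = t a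
    · apply IH s h1
      intro i hi
      rcases eq_or_ne i a with rfl | hne
      · exact hat
      · exact h2 i (by simp [hne, hi])
    · have hrel : a ∉ RelIdx S := fun hr => hat (h1 a hr)
      have hirr : Irrelevant S a := not_not.mp hrel
      have hs' : Function.update s a (t a) ∈ S := by
        apply IH
        · intro i hi
          rcases eq_or_ne i a with rfl | hne
          · simp
          · rw [Function.update_of_ne hne]; exact h1 i hi
        · intro i hi
          rcases eq_or_ne i a with rfl | hne
          · simp
          · rw [Function.update_of_ne hne]; exact h2 i (by simp [hne, hi])
      have := hirr _ hs' (s a)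
      simpa [Function.update_idem, Function.update_eq_self] using this

/-- parallel interpolation, product on the right.
`S' ⊆ S = Π_{K∈𝒥} S_K` with nonempty factors; blocks are the fibers of `f : J → ι`.
With `S''_K := {s | ∃ σ' ∈ S', s agrees with σ'↾K on R(S')∩R(S_K)}` and
`S'' := Π_K S''_K`, we get `S' ⊆ S'' ⊆ S`. -/
theorem parallel_interpolation_right
    {J ι : Type*} [Fintype J] [DecidableEq J] {X : J → Type*}
    (f : J → ι)
    (SK : ∀ k : ι, Set (∀ i : {i // f i = k}, X i.1))
    (hne : ∀ k, (SK k).Nonempty)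
    (S' S : Set (∀ i, X i))
    (hS : ∀ σ, σ ∈ S ↔ ∀ k, (fun i : {i // f i = k} => σ i.1) ∈ SK k)
    (hsub : S' ⊆ S)
    (SK'' : ∀ k : ι, Set (∀ i : {i // f i = k}, X i.1))
    (hSK'' : ∀ k, SK'' k =
      {s | ∃ σ' ∈ S', ∀ i : {i // f i = k},
        i.1 ∈ RelIdx S' → i ∈ RelIdx (SK k) → s i = σ' i.1})
    (S'' : Set (∀ i, X i))
    (hS'' : ∀ σ, σ ∈ S'' ↔ ∀ k, (fun i : {i // f i = k} => σ i.1) ∈ SK'' k) :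
    S' ⊆ S'' ∧ S'' ⊆ S := by
  constructor
  · intro σ' h'
    rw [hS'']
    intro k
    rw [hSK'']
    exact ⟨σ', h', fun i _ _ => rfl⟩
  · intro σ hσ
    rw [hS]
    intro k
    have hk := (hS'' σ).1 hσ k
    rw [hSK''] at hk
    obtain ⟨σ', hσ', hagree⟩ := hk
    classical
    haveI : DecidablePred fun i => f i = k := fun _ => Classical.dec _
    set τ : ∀ i, X i := fun i =>
      if h : f i = k then
        (if (⟨i, h⟩ : {i // f i = k}) ∈ RelIdx (SK k) then σ i else σ' i)
      else σ' i with hτ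
    have hτS' : τ ∈ S' := by
      apply mem_of_eqOn_relIdx S' hσ'
      intro i hi
      simp only [hτ]
      split
      · next h =>
        split
        · next hmem => exact hagree ⟨i, h⟩ hi hmem
        · rfl
      · rfl
    have hτSK : (fun i : {i // f i = k} => τ i.1) ∈ SK k := (hS τ).1 (hsub hτS') k
    apply mem_of_eqOn_relIdx (SK k) hτSK
    intro i hi
    show σ i.1 = τ i.1
    simp only [hτ]
    rw [dif_pos i.2]
    rw [if_pos (by simpa [Subtype.eta] using hi)]
end

section
/- Assume a notion of 'big' subsets of each product set satisfying (S*1): Δ ⊆ Σ'×Σ'' is big iff there exist Γ' ⊆ Σ' big and Γ'' ⊆ Σ'' big with Γ'×Γ'' ⊆ Δ. Define A ⊆ B to be small iff B−A ⊆ B is big. Then Γ'×Γ'' ⊆ Σ'×Σ'' is small iff Γ' ⊆ Σ' is small or Γ'' ⊆ Σ'' is small. -/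
open Set

/- A product `Δ' ×ˢ Δ''` misses `Γ' ×ˢ Γ''` exactly when one factor misses the corresponding factor,
so by (S*1) the complement of `Γ' ×ˢ Γ''` is big iff `Γ'` or `Γ''` is avoided by a big set of its
factor, that is, iff its complement there is big. -/

theorem big_diff_iff_exists_disjoint {α : Type*} {big : Set α → Set α → Prop}
    (mono : ∀ A B C : Set α, A ⊆ B → B ⊆ C → big A C → big B C) (S Γ : Set α) :
    big (S \ Γ) S ↔ ∃ Δ ⊆ S, big Δ S ∧ Disjoint Δ Γ :=
  ⟨fun h => ⟨S \ Γ, sdiff_subset, h, disjoint_sdiff_left⟩,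
    fun ⟨_, hΔ, hb, hd⟩ => mono _ _ _ (subset_sdiff.2 ⟨hΔ, hd⟩) sdiff_subset hb⟩

theorem Set.prod_subset_prod_diff_prod_iff {α β : Type*} {S' Γ' Δ' : Set α} {S'' Γ'' Δ'' : Set β}
    (hΔ' : Δ' ⊆ S') (hΔ'' : Δ'' ⊆ S'') :
    Δ' ×ˢ Δ'' ⊆ (S' ×ˢ S'') \ (Γ' ×ˢ Γ'') ↔ Disjoint Δ' Γ' ∨ Disjoint Δ'' Γ'' := by
  rw [subset_sdiff, disjoint_prod]
  exact and_iff_right (prod_mono hΔ' hΔ'')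

theorem product_small_iff_general
    {α β : Type*}
    (big' : Set α → Set α → Prop) (big'' : Set β → Set β → Prop)
    (big : Set (α × β) → Set (α × β) → Prop)
    (mono' : ∀ A B C : Set α, A ⊆ B → B ⊆ C → big' A C → big' B C)
    (mono'' : ∀ A B C : Set β, A ⊆ B → B ⊆ C → big'' A C → big'' B C)
    (refl' : ∀ A : Set α, big' A A)
    (refl'' : ∀ A : Set β, big'' A A)
    (hS1 : ∀ (S' : Set α) (S'' : Set β) (Δ : Set (α × β)), Δ ⊆ S' ×ˢ S'' →
      (big Δ (S' ×ˢ S'') ↔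
        ∃ (Γ' : Set α) (Γ'' : Set β), Γ' ⊆ S' ∧ Γ'' ⊆ S'' ∧
          big' Γ' S' ∧ big'' Γ'' S'' ∧ Γ' ×ˢ Γ'' ⊆ Δ))
    (S' Γ' : Set α) (S'' Γ'' : Set β) :
    big ((S' ×ˢ S'') \ (Γ' ×ˢ Γ'')) (S' ×ˢ S'') ↔
      big' (S' \ Γ') S' ∨ big'' (S'' \ Γ'') S'' := by
  rw [hS1 _ _ _ sdiff_subset, big_diff_iff_exists_disjoint mono',
    big_diff_iff_exists_disjoint mono'']
  constructor
  · rintro ⟨Δ', Δ'', hΔ', hΔ'', hb', hb'', hprod⟩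
    rcases (prod_subset_prod_diff_prod_iff hΔ' hΔ'').1 hprod with hd | hd
    exacts [Or.inl ⟨Δ', hΔ', hb', hd⟩, Or.inr ⟨Δ'', hΔ'', hb'', hd⟩]
  · rintro (⟨Δ', hΔ', hb', hd⟩ | ⟨Δ'', hΔ'', hb'', hd⟩)
    · exact ⟨Δ', S'', hΔ', subset_rfl, hb', refl'' S'',
        (prod_subset_prod_diff_prod_iff hΔ' subset_rfl).2 (Or.inl hd)⟩
    · exact ⟨S', Δ'', subset_rfl, hΔ'', refl' S', hb'',
        (prod_subset_prod_diff_prod_iff subset_rfl hΔ'').2 (Or.inr hd)⟩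

/-- assuming monotonicity of `big` (in each of the three universes),
that the full set is big in itself, and the product rule (S*1), a product
`Γ'×Γ'' ⊆ Σ'×Σ''` is small (its complement is big) iff `Γ' ⊆ Σ'` is small or
`Γ'' ⊆ Σ''` is small. -/
theorem product_small_iff
    {α β : Type*}
    (big' : Set α → Set α → Prop) (big'' : Set β → Set β → Prop)
    (big : Set (α × β) → Set (α × β) → Prop)
    (mono' : ∀ A B C : Set α, A ⊆ B → B ⊆ C → big' A C → big' B C)
    (mono'' : ∀ A B C : Set β, A ⊆ B → B ⊆ C → big'' A C → big'' B C)
    (mono : ∀ A B C : Set (α × β), A ⊆ B → B ⊆ C → big A C → big B C)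
    (refl' : ∀ A : Set α, big' A A)
    (refl'' : ∀ A : Set β, big'' A A)
    (hS1 : ∀ (S' : Set α) (S'' : Set β) (Δ : Set (α × β)), Δ ⊆ S' ×ˢ S'' →
      (big Δ (S' ×ˢ S'') ↔
        ∃ (Γ' : Set α) (Γ'' : Set β), Γ' ⊆ S' ∧ Γ'' ⊆ S'' ∧
          big' Γ' S' ∧ big'' Γ'' S'' ∧ Γ' ×ˢ Γ'' ⊆ Δ))
    (S' Γ' : Set α) (S'' Γ'' : Set β)
    (h1 : Γ' ⊆ S') (h2 : Γ'' ⊆ S'') :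
    big ((S' ×ˢ S'') \ (Γ' ×ˢ Γ'')) (S' ×ˢ S'') ↔
      big' (S' \ Γ') S' ∨ big'' (S'' \ Γ'') S'' :=
  product_small_iff_general big' big'' big mono' mono'' refl' refl'' hS1 S' Γ' S'' Γ''
end

section
/- Suppose bigness is given by principal filters: B ⊆ A is big iff μ(A) ⊆ B ⊆ A. Then (S*3) [for every big A ⊆ Σ there is a big B ⊆ Π'×Σ'' with B↾X'' ⊆ A↾X''] holds iff (μ*3) [μ(Π'×Σ'')↾X'' ⊆ μ(Σ)↾X''] holds, for all Σ, where Σ'' := Σ↾X'' and Π' is the full product over X'. -/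
/-! With bigness given by the principal filter of `μ P`, the smallest big subset of `P` is
`μ P` itself. So "some big `B` has a small image" just says that `μ P` has a small image,
and the condition "for every big `A ⊆ Σ`" is hardest for the smallest one, `A = μ Σ`. -/

theorem exists_between_image_subset_iff {γ δ : Type*} (f : γ → δ) {M P : Set γ}
    (hMP : M ⊆ P) (T : Set δ) :
    (∃ B, B ⊆ P ∧ M ⊆ B ∧ f '' B ⊆ T) ↔ f '' M ⊆ T :=
  ⟨fun ⟨_, _, hMB, hBT⟩ => (Set.image_mono hMB).trans hBT,
    fun hMT => ⟨M, hMP, subset_rfl, hMT⟩⟩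

theorem forall_between_iff_of_monotone {γ : Type*} {M S : Set γ} (hMS : M ⊆ S)
    {Q : Set γ → Prop} (hQ : Monotone Q) :
    (∀ A, A ⊆ S → M ⊆ A → Q A) ↔ Q M :=
  ⟨fun h => h M hMS subset_rfl, fun hM _ _ hMA => hQ hMA hM⟩

/-- with bigness given by principal filters (`B ⊆ A` is big iff
`μ(A) ⊆ B ⊆ A`), the rule (S*3) [for every big `A ⊆ Σ` there is a big
`B ⊆ Π'×Σ''` with `B↾X'' ⊆ A↾X''`] holds for all `Σ, A` iff the rule (μ*3)
[`μ(Π'×Σ'')↾X'' ⊆ μ(Σ)↾X''`] holds for all `Σ`.  Full sequences are pairs in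
`α × β`; `Π'` is the full product over `X'` (all of `α`), `Σ'' = Σ↾X''` is the
image under the second projection. -/
theorem S3_iff_mu3
    {α β : Type*}
    (μ : Set (α × β) → Set (α × β)) (hμ : ∀ A, μ A ⊆ A) :
    ((∀ (S A : Set (α × β)), A ⊆ S → μ S ⊆ A →
        ∃ B : Set (α × β), B ⊆ Set.univ ×ˢ (Prod.snd '' S) ∧
          μ (Set.univ ×ˢ (Prod.snd '' S)) ⊆ B ∧
          Prod.snd '' B ⊆ Prod.snd '' A)
      ↔ (∀ S : Set (α × β),
          Prod.snd '' μ (Set.univ ×ˢ (Prod.snd '' S)) ⊆ Prod.snd '' μ S)) := by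
  refine forall_congr' fun S => ?_
  simp_rw [exists_between_image_subset_iff Prod.snd (hμ (Set.univ ×ˢ (Prod.snd '' S)))]
  exact forall_between_iff_of_monotone (hμ S) fun _ _ hAA' hA => hA.trans (Set.image_mono hAA')
end

section
/- Assume μ satisfies (μ*1): μ(Σ'×Σ'') = μ(Σ')×μ(Σ'') and (μ*2): μ(Σ) ⊆ Γ ⇒ μ(Σ↾X') ⊆ Γ↾X'. Let Σ be any set of sequences over X = X' ∪ X'' and Γ'' a set of sequences over X''. If μ(Σ) ⊆ Π'×Γ'', then μ(Π'×(Σ↾X'')) ⊆ Π'×Γ''. (Semantic interpolation of the form φ ⊢ α |∼ ψ: the theory of Π'×(Σ↾X'') serves as interpolant.) -/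
theorem interpolation_from_mu1_mu2_general
    {α β : Type*}
    (μ : Set (α × β) → Set (α × β)) (μ' : Set α → Set α) (μ'' : Set β → Set β)
    (hmu1 : ∀ (S' : Set α) (S'' : Set β), μ (S' ×ˢ S'') = μ' S' ×ˢ μ'' S'')
    (hmu2 : ∀ (S Γ : Set (α × β)), μ S ⊆ Γ → μ'' (Prod.snd '' S) ⊆ Prod.snd '' Γ)
    (S : Set (α × β)) (Γ'' : Set β)
    (h : μ S ⊆ Set.univ ×ˢ Γ'') :
    μ (Set.univ ×ˢ (Prod.snd '' S)) ⊆ Set.univ ×ˢ Γ'' := by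
  rw [hmu1]
  exact Set.prod_mono (Set.subset_univ _) ((hmu2 S _ h).trans (Set.snd_image_prod_subset _ _))

/-- assume (μ*1) and (μ*2) (the latter instantiated with the
partition (X'', X')).  Full sequences are pairs in `α × β` (`α` for `X'`, `β` for
`X''`); `Π'` is all of `α`.  If `μ(Σ) ⊆ Π'×Γ''` then `μ(Π'×(Σ↾X'')) ⊆ Π'×Γ''`:
the theory of `Π'×(Σ↾X'')` serves as interpolant. -/
theorem interpolation_from_mu1_mu2
    {α β : Type*}
    (μ : Set (α × β) → Set (α × β)) (μ' : Set α → Set α) (μ'' : Set β → Set β)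
    (hμ : ∀ A, μ A ⊆ A) (hμ' : ∀ A, μ' A ⊆ A) (hμ'' : ∀ A, μ'' A ⊆ A)
    (hmu1 : ∀ (S' : Set α) (S'' : Set β), μ (S' ×ˢ S'') = μ' S' ×ˢ μ'' S'')
    (hmu2 : ∀ (S Γ : Set (α × β)), μ S ⊆ Γ → μ'' (Prod.snd '' S) ⊆ Prod.snd '' Γ)
    (S : Set (α × β)) (Γ'' : Set β)
    (h : μ S ⊆ Set.univ ×ˢ Γ'') :
    μ (Set.univ ×ˢ (Prod.snd '' S)) ⊆ Set.univ ×ˢ Γ'' :=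
  interpolation_from_mu1_mu2_general μ μ' μ'' hmu1 hmu2 S Γ'' h
end

section
/- Assume μ satisfies (μ*3): μ(Π'×(Σ↾X''))↾X'' ⊆ μ(Σ)↾X'' for all Σ. If μ(Σ) ⊆ Π'×Γ'' for some set Γ'' of X''-sequences, then μ(Π'×(Σ↾X'')) ⊆ Π'×Γ''. -/
theorem interpolation_from_mu3_general
    {α β : Type*}
    (μ : Set (α × β) → Set (α × β))
    (hmu3 : ∀ S : Set (α × β),
      Prod.snd '' μ (Set.univ ×ˢ (Prod.snd '' S)) ⊆ Prod.snd '' μ S)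
    (S : Set (α × β)) (Γ'' : Set β)
    (h : μ S ⊆ Set.univ ×ˢ Γ'') :
    μ (Set.univ ×ˢ (Prod.snd '' S)) ⊆ Set.univ ×ˢ Γ'' := by
  rw [Set.univ_prod (t := Γ''), ← Set.image_subset_iff] at h ⊢
  exact (hmu3 S).trans h

/-- assume (μ*3): `μ(Π'×(Σ↾X''))↾X'' ⊆ μ(Σ)↾X''` for all `Σ`.
Full sequences are pairs in `α × β` (`α` for `X'`, `β` for `X''`); `Π'` is all of
`α`.  If `μ(Σ) ⊆ Π'×Γ''` then `μ(Π'×(Σ↾X'')) ⊆ Π'×Γ''`. -/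
theorem interpolation_from_mu3
    {α β : Type*}
    (μ : Set (α × β) → Set (α × β)) (hμ : ∀ A, μ A ⊆ A)
    (hmu3 : ∀ S : Set (α × β),
      Prod.snd '' μ (Set.univ ×ˢ (Prod.snd '' S)) ⊆ Prod.snd '' μ S)
    (S : Set (α × β)) (Γ'' : Set β)
    (h : μ S ⊆ Set.univ ×ˢ Γ'') :
    μ (Set.univ ×ˢ (Prod.snd '' S)) ⊆ Set.univ ×ˢ Γ'' :=
  interpolation_from_mu3_general μ hmu3 S Γ'' h
end

section
/- Let ≼ be a smooth Hamming relation on sequences over X = X' ∪ X''. If μ(Σ) ⊆ Γ, then μ(Σ↾X') ⊆ Γ↾X'. (I.e., smooth Hamming relations satisfy (μ*2).) -/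
/-- The Hamming (componentwise) relation on full sequences `α × β` built from the
component relations. -/
def hle {α β : Type*} (le' : α → α → Prop) (le'' : β → β → Prop)
    (σ τ : α × β) : Prop :=
  le' σ.1 τ.1 ∧ le'' σ.2 τ.2

/-- The strict part of a relation: `x ≺ y` iff `x ≼ y` and `x ≠ y`. -/
def slt {γ : Type*} (le : γ → γ → Prop) (x y : γ) : Prop :=
  le x y ∧ x ≠ y

/-- `muRel le S`: the set of `≺`-minimal elements of `S`. -/
def muRel {γ : Type*} (le : γ → γ → Prop) (S : Set γ) : Set γ :=
  {x ∈ S | ¬ ∃ y ∈ S, slt le y x}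

/-- Smoothness of `S`: every non-minimal element of `S` has a minimal element
strictly below it. -/
def IsSmooth {γ : Type*} (le : γ → γ → Prop) (S : Set γ) : Prop :=
  ∀ x ∈ S, x ∉ muRel le S → ∃ y ∈ muRel le S, slt le y x

theorem eq_of_mem_muRel_of_le {γ : Type*} {le : γ → γ → Prop} {S : Set γ} {x y : γ}
    (hx : x ∈ muRel le S) (hy : y ∈ S) (hyx : le y x) : y = x := by
  by_contra hne
  exact hx.2 ⟨y, hy, hyx, hne⟩

theorem IsSmooth.exists_mem_muRel_eq_or_slt {γ : Type*} {le : γ → γ → Prop} {S : Set γ}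
    (hsm : IsSmooth le S) {x : γ} (hx : x ∈ S) : ∃ y ∈ muRel le S, y = x ∨ slt le y x := by
  by_cases hμ : x ∈ muRel le S
  · exact ⟨x, hμ, Or.inl rfl⟩
  · obtain ⟨y, hyμ, hyx⟩ := hsm x hx hμ
    exact ⟨y, hyμ, Or.inr hyx⟩

/-- The minimal element of `S` below `σ` projects to some `ρ.1 ≼ σ.1`, which minimality of
`σ.1` in `S↾X'` forces to equal `σ.1`. -/
theorem muRel_image_fst_subset_image_fst_muRel {α β : Type*} {le' : α → α → Prop}
    {le'' : β → β → Prop} {S : Set (α × β)} (hsm : IsSmooth (hle le' le'') S) :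
    muRel le' (Prod.fst '' S) ⊆ Prod.fst '' muRel (hle le' le'') S := by
  rintro _ hmin
  obtain ⟨σ, hσS, rfl⟩ := hmin.1
  obtain ⟨ρ, hρμ, rfl | hρσ⟩ := hsm.exists_mem_muRel_eq_or_slt hσS
  · exact ⟨ρ, hρμ, rfl⟩
  · exact ⟨ρ, hρμ, eq_of_mem_muRel_of_le hmin ⟨ρ, hρμ.1, rfl⟩ hρσ.1.1⟩

/-- a smooth Hamming relation satisfies (μ*2): if `μ(Σ) ⊆ Γ` then
`μ(Σ↾X') ⊆ Γ↾X'` (restriction to `X'` being the first projection). -/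
theorem smooth_hamming_mu2
    {α β : Type*} (le' : α → α → Prop) (le'' : β → β → Prop)
    (S Γ : Set (α × β))
    (hsm : IsSmooth (hle le' le'') S)
    (h : muRel (hle le' le'') S ⊆ Γ) :
    muRel le' (Prod.fst '' S) ⊆ Prod.fst '' Γ :=
  (muRel_image_fst_subset_image_fst_muRel hsm).trans (Set.image_mono h)
end

section
/- Let ≼ be a smooth Hamming relation. If μ(Σ↾X') × μ(Σ↾X'') ⊆ Σ (where Σ need not be a product), then μ(Σ) = μ(Σ↾X') × μ(Σ↾X''). -/
/-!
A concatenation of component minima that lies in `Σ` is `Σ`-minimal, because anything below it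
in `Σ` restricts to elements below each component. Conversely, for `σ ∈ μ(Σ)` smoothness and
reflexivity give component minima `a' ≼ σ↾X'` and `b' ≼ σ↾X''`, with equality only if the
restriction is itself minimal; `a'b'` lies in `Σ` by hypothesis and is `≼ σ`, so it equals `σ`.
-/

theorem mem_muRel_iff {γ : Type*} {le : γ → γ → Prop} {S : Set γ} {x : γ} :
    x ∈ muRel le S ↔ x ∈ S ∧ ∀ y ∈ S, le y x → y = x := by
  simp only [muRel, slt, Set.mem_ofPred_eq, not_exists, not_and, not_not]

theorem IsSmooth.exists_muRel_le {γ : Type*} {le : γ → γ → Prop} {S : Set γ}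
    (hrefl : ∀ x, le x x) (hS : IsSmooth le S) {x : γ} (hx : x ∈ S) :
    ∃ y ∈ muRel le S, le y x ∧ (y = x → x ∈ muRel le S) := by
  by_cases hμ : x ∈ muRel le S
  · exact ⟨x, hμ, hrefl x, fun _ => hμ⟩
  · obtain ⟨y, hy, hyx, hne⟩ := hS x hx hμ
    exact ⟨y, hy, hyx, fun h => absurd h hne⟩

section Hamming

variable {α β : Type*} {le' : α → α → Prop} {le'' : β → β → Prop} {S : Set (α × β)}

theorem mk_mem_muRel_hle {a : α} {b : β} (hab : (a, b) ∈ S)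
    (ha : a ∈ muRel le' (Prod.fst '' S)) (hb : b ∈ muRel le'' (Prod.snd '' S)) :
    (a, b) ∈ muRel (hle le' le'') S := by
  refine mem_muRel_iff.2 ⟨hab, ?_⟩
  rintro ⟨c, d⟩ hcd ⟨hca, hdb⟩
  rw [(mem_muRel_iff.1 ha).2 c ⟨_, hcd, rfl⟩ hca, (mem_muRel_iff.1 hb).2 d ⟨_, hcd, rfl⟩ hdb]

theorem muRel_hle_subset_prod (hrefl' : ∀ a, le' a a) (hrefl'' : ∀ b, le'' b b)
    (hsm' : IsSmooth le' (Prod.fst '' S)) (hsm'' : IsSmooth le'' (Prod.snd '' S))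
    (h : muRel le' (Prod.fst '' S) ×ˢ muRel le'' (Prod.snd '' S) ⊆ S) :
    muRel (hle le' le'') S ⊆ muRel le' (Prod.fst '' S) ×ˢ muRel le'' (Prod.snd '' S) := by
  rintro ⟨a, b⟩ hab
  obtain ⟨habS, hmin⟩ := mem_muRel_iff.1 hab
  obtain ⟨a', ha', ha'a, ha⟩ := hsm'.exists_muRel_le hrefl' ⟨_, habS, rfl⟩
  obtain ⟨b', hb', hb'b, hb⟩ := hsm''.exists_muRel_le hrefl'' ⟨_, habS, rfl⟩
  have heq : (a', b') = (a, b) := hmin _ (h ⟨ha', hb'⟩) ⟨ha'a, hb'b⟩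
  rw [Prod.mk.injEq] at heq
  exact ⟨ha heq.1, hb heq.2⟩

end Hamming

/-- for a smooth Hamming relation, if
`μ(Σ↾X') × μ(Σ↾X'') ⊆ Σ` (where `Σ` need not be a product), then
`μ(Σ) = μ(Σ↾X') × μ(Σ↾X'')`.  Smoothness is assumed for the component sets, and
the component relations are reflexive. -/
theorem smooth_hamming_mu_product
    {α β : Type*} (le' : α → α → Prop) (le'' : β → β → Prop)
    (hrefl' : ∀ a, le' a a) (hrefl'' : ∀ b, le'' b b)
    (S : Set (α × β))
    (hsm' : IsSmooth le' (Prod.fst '' S))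
    (hsm'' : IsSmooth le'' (Prod.snd '' S))
    (h : muRel le' (Prod.fst '' S) ×ˢ muRel le'' (Prod.snd '' S) ⊆ S) :
    muRel (hle le' le'') S = muRel le' (Prod.fst '' S) ×ˢ muRel le'' (Prod.snd '' S) :=
  (muRel_hle_subset_prod hrefl' hrefl'' hsm' hsm'' h).antisymm
    fun _ hab => mk_mem_muRel_hle (h hab) hab.1 hab.2
end
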